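/- If F is an indexed linear tree with c(F) = (0^j, α_1, ..., α_k) where all α_i > 0 and j ≥ 0, then the forest polynomial β_F equals the fundamental quasisymmetric polynomial F_α(x_1, ..., x_{k+j}) indexed by the composition α = (α_1,...,α_k). -/

import Mathlib

/-- Plane binary trees. `leaf` is a leaf, `node l r` an internal node. -/
inductive BT where
  | leaf : BT
  | node : BT → BT → BT
deriving DecidableEq

/-- Number of internal nodes. -/
def BT.size : BT → ℕ
  | .leaf => 0
  | .node l r => l.size + r.size + 1

/-- Multiset of values `ρ_F(v)` (canonical label of the leftmost descendant,
reached by following left edges) over the internal nodes of a tree whose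
inorder canonical labels start at `a`. -/
def BT.rhoMS : BT → ℤ → Multiset ℤ
  | .leaf, _ => 0
  | .node l r, a => a ::ₘ (l.rhoMS a + r.rhoMS (a + l.size + 1))

/-- Multiset of canonical labels of internal nodes whose left child is a leaf
("left support"). -/
def BT.lsuppMS : BT → ℤ → Multiset ℤ
  | .leaf, _ => 0
  | .node l r, a =>
      (if l = BT.leaf then ({a} : Multiset ℤ) else 0) + l.lsuppMS a
        + r.lsuppMS (a + l.size + 1)

/-- The flagged generating polynomial of a binary tree with inorder labels
starting at `a`, where every label is at least `lo` (lower bound transmitted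
from the parent), at most the `ρ`-value of the node, labels weakly increase
down left edges and strictly increase down right edges. The variables are
`x_1, x_2, …` (the variable `X 0` is unused). -/
noncomputable def BT.polyAux : BT → ℤ → ℕ → MvPolynomial ℕ ℚ
  | .leaf, _, _ => 1
  | .node l r, a, lo =>
      ∑ k ∈ Finset.Icc lo a.toNat,
        MvPolynomial.X k * l.polyAux a k * r.polyAux (a + l.size + 1) (k + 1)

/-- The forest polynomial of a single indexed tree with support starting at `a`. -/
noncomputable def BT.poly (t : BT) (a : ℤ) : MvPolynomial ℕ ℚ := t.polyAux a 1

/-- An indexed forest: a list of binary trees together with the starting points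
of their supports, the supports being maximal intervals (consecutive supports
leave a gap of at least one integer). -/
structure IndexedForest where
  trees : List (ℤ × BT)
  nonempty : ∀ p ∈ trees, p.2 ≠ BT.leaf
  gaps : trees.Chain' (fun p q => p.1 + (p.2.size : ℤ) + 1 ≤ q.1)

/-- The support of an indexed forest, as a set of integers. -/
def IndexedForest.Supp (F : IndexedForest) : Set ℤ :=
  {i | ∃ p ∈ F.trees, p.1 ≤ i ∧ i < p.1 + (p.2.size : ℤ)}

/-- The multiset of `ρ_F`-values of all internal nodes of `F`. -/
def IndexedForest.rhoMS (F : IndexedForest) : Multiset ℤ :=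
  (F.trees.map (fun p => p.2.rhoMS p.1)).sum

/-- The `ℕ`-vector `c(F)`: `c_i` counts internal nodes with `ρ_F`-value `i`. -/
def cOf (F : IndexedForest) : ℤ → ℕ := fun i => F.rhoMS.count i

/-- The multiset of left-support labels of `F`. -/
def IndexedForest.lsuppMS (F : IndexedForest) : Multiset ℤ :=
  (F.trees.map (fun p => p.2.lsuppMS p.1)).sum

/-- Forest polynomial of a list of located trees. -/
noncomputable def polyL (ts : List (ℤ × BT)) : MvPolynomial ℕ ℚ :=
  (ts.map (fun p => p.2.poly p.1)).prod

/-- The forest polynomial of an indexed forest. -/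
noncomputable def IndexedForest.poly (F : IndexedForest) : MvPolynomial ℕ ℚ :=
  polyL F.trees

/-- Number of internal nodes of a forest. -/
def IndexedForest.size (F : IndexedForest) : ℕ :=
  (F.trees.map (fun p => p.2.size)).sum

/-- A linear binary tree: the internal nodes form a path (every internal node
has at most one internal-node child). -/
def BT.linear : BT → Prop
  | .leaf => True
  | .node l r => (l = BT.leaf ∨ r = BT.leaf) ∧ l.linear ∧ r.linear


/-- The (1-based) positions of the strict inequalities prescribed by a
composition `α`: its partial sums `α_1 + ⋯ + α_s`. -/
def psums (α : List ℕ) : List ℕ :=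
  (List.range α.length).map (fun s => (α.take (s + 1)).sum)

/-- Monomial-supporting sequences for the fundamental quasisymmetric polynomial
`F_α(x_1,…,x_n)`: weakly increasing sequences `1 ≤ i_1 ≤ ⋯ ≤ i_m ≤ n`
(`m = |α|`) with strict increase after each partial sum of `α`. -/
def fundSet (α : List ℕ) (n : ℕ) : Set (List ℕ) :=
  {L | L.length = α.sum ∧ (∀ x ∈ L, 1 ≤ x ∧ x ≤ n) ∧
    ∀ t, t + 1 < L.length →
      (L.getD t 0 ≤ L.getD (t + 1) 0 ∧
        ((t + 1) ∈ psums α → L.getD t 0 < L.getD (t + 1) 0))}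

/-- The fundamental quasisymmetric polynomial `F_α(x_1,…,x_n)`. -/
noncomputable def fundQ (α : List ℕ) (n : ℕ) : MvPolynomial ℕ ℚ :=
  ∑ᶠ L ∈ fundSet α n, (L.map (fun i => (MvPolynomial.X i : MvPolynomial ℕ ℚ))).prod

/-!
Along the path of a linear tree a left step keeps `ρ` and a right step raises it by one, so the
`ρ`-values met along the path are `(j+1)^{α₁} (j+2)^{α₂} ⋯` and the right steps sit exactly at the
partial sums of `α`. Thus `β_F` sums the monomials of weakly increasing labelings with strict
ascents at the partial sums of `α`, the `i`-th block being bounded by `j + i`. In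
`F_α(x_1, …, x_{k+j})` these flag bounds are automatic, since the `k - i` strict ascents after the
`i`-th block must fit below `k + j`. So both sides obey the same recursion in the first label.
-/

open MvPolynomial

theorem finsum_mem_biUnion_image_cons {α R : Type*} [CommSemiring R] (f : α → R) (I : Finset α)
    (S : α → Set (List α)) (hS : ∀ k, (S k).Finite) :
    ∑ᶠ L ∈ ⋃ k ∈ I, (k :: ·) '' S k, (L.map f).prod =
      ∑ k ∈ I, f k * ∑ᶠ L ∈ S k, (L.map f).prod := by
  have hdisj : (I : Set α).PairwiseDisjoint fun k => (k :: ·) '' S k := by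
    intro k _ k' _ hkk'
    simp only [Function.onFun, Set.disjoint_left, Set.mem_image]
    rintro _ ⟨L, _, rfl⟩ ⟨L', _, h⟩
    exact hkk' (List.cons_eq_cons.mp h).1.symm
  rw [← Finset.set_biUnion_coe,
    finsum_mem_biUnion hdisj I.finite_toSet fun k _ => (hS k).image _, finsum_mem_coe_finset]
  refine Finset.sum_congr rfl fun k _ => ?_
  rw [finsum_mem_image List.cons_injective.injOn, mul_finsum_mem' _ _ (hS k)]
  simp

-- `P` marks the strict ascents by 1-based position, as `psums` does in `fundSet`.
def IsAscentChain (P : ℕ → Prop) (L : List ℕ) : Prop :=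
  ∀ t, t + 1 < L.length →
    (L.getD t 0 ≤ L.getD (t + 1) 0 ∧ (P (t + 1) → L.getD t 0 < L.getD (t + 1) 0))

def ascentSeqs (P : ℕ → Prop) (m n lo : ℕ) : Set (List ℕ) :=
  {L | L.length = m ∧ (∀ x ∈ L, lo ≤ x ∧ x ≤ n) ∧ IsAscentChain P L}

section AscentSeqs

variable {P Q : ℕ → Prop}

theorem IsAscentChain.getD_zero_le {L : List ℕ} (h : IsAscentChain P L) {x : ℕ} (hx : x ∈ L) :
    L.getD 0 0 ≤ x := by
  obtain ⟨t, ht, rfl⟩ := List.getElem_of_mem hx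
  rw [← List.getD_eq_getElem _ 0 ht]
  induction t with
  | zero => rfl
  | succ t ih => exact (ih (by omega) (List.getElem_mem _)).trans (h t ht).1

theorem isAscentChain_cons {k : ℕ} {L : List ℕ} :
    IsAscentChain P (k :: L) ↔
      (∀ x ∈ L.head?, k ≤ x ∧ (P 1 → k < x)) ∧ IsAscentChain (fun u => P (u + 1)) L := by
  cases L with
  | nil => simp [IsAscentChain]
  | cons y L =>
    constructor
    · intro h
      refine ⟨by simpa using h 0 (by simp), fun t ht => ?_⟩
      simpa using h (t + 1) (by simpa using ht)
    · rintro ⟨hy, h⟩ (_ | t) ht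
      · simpa using hy
      · simpa using h t (by simpa using ht)

theorem isAscentChain_congr (h : ∀ u, P (u + 1) ↔ Q (u + 1)) {L : List ℕ} :
    IsAscentChain P L ↔ IsAscentChain Q L := by
  simp only [IsAscentChain, h]

theorem ascentSeqs_congr (h : ∀ u, P (u + 1) ↔ Q (u + 1)) (m n lo : ℕ) :
    ascentSeqs P m n lo = ascentSeqs Q m n lo := by
  ext L
  simp only [ascentSeqs, Set.mem_ofPred_eq, isAscentChain_congr h]

theorem ascentSeqs_zero (n lo : ℕ) : ascentSeqs P 0 n lo = {[]} := by
  ext L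
  simp +contextual [ascentSeqs, IsAscentChain, List.length_eq_zero_iff]

variable [DecidablePred P]

theorem cons_mem_ascentSeqs {k m n lo : ℕ} {L : List ℕ} :
    k :: L ∈ ascentSeqs P (m + 1) n lo ↔
      lo ≤ k ∧ k ≤ n ∧ L ∈ ascentSeqs (fun u => P (u + 1)) m n (if P 1 then k + 1 else k) := by
  simp only [ascentSeqs, Set.mem_ofPred_eq, List.length_cons, List.mem_cons, forall_eq_or_imp,
    isAscentChain_cons, Nat.add_right_cancel_iff]
  constructor
  · rintro ⟨hm, ⟨⟨hlo, hn⟩, hL⟩, hhead, hchain⟩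
    refine ⟨hlo, hn, hm, fun x hx => ⟨?_, (hL x hx).2⟩, hchain⟩
    cases L with
    | nil => simp at hx
    | cons y L =>
      have hyx : y ≤ x := by simpa using hchain.getD_zero_le hx
      have hky := hhead y rfl
      split_ifs with hP
      exacts [(hky.2 hP).trans_le hyx, hky.1.trans hyx]
  · rintro ⟨hlo, hn, hm, hL, hchain⟩
    refine ⟨hm, ⟨⟨hlo, hn⟩, fun x hx => ⟨?_, (hL x hx).2⟩⟩, fun x hx => ?_, hchain⟩
    · have := (hL x hx).1
      split_ifs at this <;> omega
    · have := (hL x (List.mem_of_mem_head? hx)).1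
      split_ifs at this
      exacts [⟨by omega, fun _ => by omega⟩, ⟨this, fun hP => absurd hP ‹_›⟩]

theorem ascentSeqs_succ (m n lo : ℕ) :
    ascentSeqs P (m + 1) n lo = ⋃ k ∈ Finset.Icc lo n,
      (k :: ·) '' ascentSeqs (fun u => P (u + 1)) m n (if P 1 then k + 1 else k) := by
  ext (_ | ⟨k, L⟩)
  · simp [ascentSeqs]
  · simp [cons_mem_ascentSeqs, and_comm, and_assoc]

theorem ascentSeqs_finite (m n lo : ℕ) : (ascentSeqs P m n lo).Finite := by
  induction m generalizing P lo with
  | zero => simp [ascentSeqs_zero]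
  | succ m ih =>
    rw [ascentSeqs_succ]
    exact (Finset.Icc lo n).finite_toSet.biUnion fun k _ => (ih _).image _

end AscentSeqs

theorem psums_cons (a : ℕ) (l : List ℕ) : psums (a :: l) = a :: (psums l).map (a + ·) := by
  simp [psums, List.range_succ_eq_map, Function.comp_def]

def fundSetFrom (α : List ℕ) (n lo : ℕ) : Set (List ℕ) :=
  ascentSeqs (· ∈ psums α) α.sum n lo

noncomputable def fundQFrom (α : List ℕ) (n lo : ℕ) : MvPolynomial ℕ ℚ :=
  ∑ᶠ L ∈ fundSetFrom α n lo, (L.map X).prod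

theorem fundQFrom_one (α : List ℕ) (n : ℕ) : fundQFrom α n 1 = fundQ α n := rfl

theorem fundSetFrom_nil (n lo : ℕ) : fundSetFrom [] n lo = {[]} :=
  ascentSeqs_zero n lo

theorem fundSetFrom_finite (α : List ℕ) (n lo : ℕ) : (fundSetFrom α n lo).Finite :=
  ascentSeqs_finite _ n lo

theorem fundSetFrom_one_cons (β : List ℕ) (n lo : ℕ) :
    fundSetFrom (1 :: β) n lo = ⋃ k ∈ Finset.Icc lo n, (k :: ·) '' fundSetFrom β n (k + 1) := by
  rw [fundSetFrom, List.sum_cons, add_comm, ascentSeqs_succ]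
  have hshift : ∀ u, u + 1 + 1 ∈ psums (1 :: β) ↔ u + 1 ∈ psums β := by
    simp [psums_cons, add_comm 1]
  have hone : 1 ∈ psums (1 :: β) := by simp [psums_cons]
  simp only [ascentSeqs_congr (P := fun u => u + 1 ∈ psums (1 :: β)) (Q := (· ∈ psums β)) hshift,
    if_pos hone]
  rfl

theorem fundSetFrom_succ_cons {b : ℕ} (hb : b ≠ 0) (β : List ℕ) (n lo : ℕ) :
    fundSetFrom ((b + 1) :: β) n lo =
      ⋃ k ∈ Finset.Icc lo n, (k :: ·) '' fundSetFrom (b :: β) n k := by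
  rw [fundSetFrom, List.sum_cons, add_right_comm, ← List.sum_cons, ascentSeqs_succ]
  have hshift : ∀ u, u + 1 + 1 ∈ psums ((b + 1) :: β) ↔ u + 1 ∈ psums (b :: β) := by
    simp only [psums_cons, List.mem_cons, List.mem_map]
    intro u
    refine or_congr (by omega) (exists_congr fun a => and_congr_right fun _ => ?_)
    omega
  have hone : 1 ∉ psums ((b + 1) :: β) := by
    simp only [psums_cons, List.mem_cons, List.mem_map, not_or, not_exists, not_and]
    exact ⟨by omega, fun v _ => by omega⟩
  simp only [ascentSeqs_congr (P := fun u => u + 1 ∈ psums ((b + 1) :: β))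
    (Q := (· ∈ psums (b :: β))) hshift, if_neg hone]
  rfl

theorem fundSetFrom_eq_empty : ∀ {α : List ℕ} {n lo : ℕ}, (∀ x ∈ α, 0 < x) → α ≠ [] →
    n + 1 < lo + α.length → fundSetFrom α n lo = ∅
  | [], _, _, _, hne, _ => absurd rfl hne
  | 0 :: _, _, _, hα, _, _ => absurd (hα 0 List.mem_cons_self) (lt_irrefl 0)
  | 1 :: β, n, lo, hα, _, h => by
    rw [fundSetFrom_one_cons]
    simp only [Set.iUnion_eq_empty, Set.image_eq_empty, Finset.mem_Icc]
    intro k hk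
    rcases eq_or_ne β [] with rfl | hβ
    · rw [List.length_singleton] at h; omega
    · exact fundSetFrom_eq_empty (fun x hx => hα x (List.mem_cons_of_mem _ hx)) hβ
        (by rw [List.length_cons] at h; omega)
  | (b + 2) :: β, n, lo, hα, _, h => by
    rw [fundSetFrom_succ_cons (b := b + 1) b.succ_ne_zero]
    simp only [Set.iUnion_eq_empty, Set.image_eq_empty, Finset.mem_Icc]
    intro k hk
    refine fundSetFrom_eq_empty ?_ (List.cons_ne_nil _ _) (by rw [List.length_cons] at h ⊢; omega)
    simp only [List.mem_cons, forall_eq_or_imp] at hα ⊢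
    exact ⟨b.succ_pos, hα.2⟩
termination_by α => α.sum

theorem fundQFrom_nil (n lo : ℕ) : fundQFrom [] n lo = 1 := by
  simp [fundQFrom, fundSetFrom_nil]

theorem fundQFrom_one_cons {β : List ℕ} (hβ : ∀ x ∈ β, 0 < x) {n s : ℕ} (hn : n = s + β.length)
    (lo : ℕ) : fundQFrom (1 :: β) n lo = ∑ k ∈ Finset.Icc lo s, X k * fundQFrom β n (k + 1) := by
  rw [fundQFrom, fundSetFrom_one_cons,
    finsum_mem_biUnion_image_cons _ _ _ fun k => fundSetFrom_finite β n (k + 1)]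
  -- a first entry `k > s` leaves too little room for the strict ascents of `β`
  refine (Finset.sum_subset (Finset.Icc_subset_Icc_right (by omega)) fun k hk hks => ?_).symm
  simp only [Finset.mem_Icc, not_and, not_le] at hk hks
  have hβne : β ≠ [] := by rintro rfl; rw [List.length_nil] at hn; omega
  simp [fundSetFrom_eq_empty hβ hβne (by omega : n + 1 < k + 1 + β.length)]

theorem fundQFrom_succ_cons {b : ℕ} (hb : b ≠ 0) {β : List ℕ} (hβ : ∀ x ∈ β, 0 < x) {n s : ℕ}
    (hn : n = s + β.length) (lo : ℕ) :
    fundQFrom ((b + 1) :: β) n lo = ∑ k ∈ Finset.Icc lo s, X k * fundQFrom (b :: β) n k := by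
  rw [fundQFrom, fundSetFrom_succ_cons hb,
    finsum_mem_biUnion_image_cons _ _ _ fun k => fundSetFrom_finite (b :: β) n k]
  refine (Finset.sum_subset (Finset.Icc_subset_Icc_right (by omega)) fun k hk hks => ?_).symm
  simp only [Finset.mem_Icc, not_and, not_le] at hk hks
  have hbβ : ∀ x ∈ b :: β, 0 < x := by
    simpa [Nat.pos_iff_ne_zero] using ⟨hb, fun x hx => (hβ x hx).ne'⟩
  simp [fundSetFrom_eq_empty hbβ (List.cons_ne_nil _ _)
    (by rw [List.length_cons]; omega : n + 1 < k + (b :: β).length)]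

def HasCountsFrom (M : Multiset ℤ) (a : ℤ) (α : List ℕ) : Prop :=
  ∀ i : ℕ, M.count (a + i) = α.getD i 0

theorem hasCountsFrom_cons_iff {M : Multiset ℤ} {a : ℤ} {x : ℕ} {β : List ℕ} :
    HasCountsFrom M a (x :: β) ↔ M.count a = x ∧ HasCountsFrom M (a + 1) β := by
  constructor
  · intro h
    refine ⟨by simpa using h 0, fun i => ?_⟩
    simpa [add_assoc, add_comm (1 : ℤ)] using h (i + 1)
  · rintro ⟨h0, h⟩ (_ | i)
    · simpa using h0
    · simpa [add_assoc, add_comm (1 : ℤ)] using h i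

theorem hasCountsFrom_cons_of_lt {M : Multiset ℤ} {a b : ℤ} (hba : b < a) {α : List ℕ} :
    HasCountsFrom (b ::ₘ M) a α ↔ HasCountsFrom M a α := by
  refine forall_congr' fun i => ?_
  rw [Multiset.count_cons_of_ne (by omega)]

theorem BT.le_of_mem_rhoMS : ∀ {t : BT} {a v : ℤ}, v ∈ t.rhoMS a → a ≤ v
  | .leaf, _, _, h => by simp [BT.rhoMS] at h
  | .node l r, a, v, h => by
    simp only [BT.rhoMS, Multiset.mem_cons, Multiset.mem_add] at h
    rcases h with rfl | h | h
    · exact le_rfl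
    · exact BT.le_of_mem_rhoMS h
    · have := BT.le_of_mem_rhoMS h
      omega

theorem BT.count_rhoMS_of_lt {t : BT} {a v : ℤ} (hva : v < a) : (t.rhoMS a).count v = 0 :=
  Multiset.count_eq_zero.2 fun h => (BT.le_of_mem_rhoMS h).not_gt hva

theorem BT.mem_rhoMS_self {t : BT} (ht : t ≠ .leaf) (a : ℤ) : a ∈ t.rhoMS a := by
  cases t with
  | leaf => exact absurd rfl ht
  | node l r => exact Multiset.mem_cons_self _ _

theorem HasCountsFrom.exists_cons {M : Multiset ℤ} {a : ℤ} {α : List ℕ} (h : HasCountsFrom M a α)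
    (ha : a ∈ M) : ∃ x β, α = x :: β := by
  cases α with
  | nil => exact absurd ha (by simpa [HasCountsFrom] using h 0)
  | cons x β => exact ⟨x, β, rfl⟩

theorem BT.hasCountsFrom_node_leaf_left {r : BT} {a : ℤ} {α : List ℕ}
    (h : HasCountsFrom ((BT.node .leaf r).rhoMS a) a α) :
    ∃ β, α = 1 :: β ∧ HasCountsFrom (r.rhoMS (a + 1)) (a + 1) β := by
  obtain ⟨x, β, rfl⟩ := h.exists_cons (BT.mem_rhoMS_self BT.noConfusion a)
  simp only [hasCountsFrom_cons_iff, BT.rhoMS, BT.size, Nat.cast_zero, add_zero, zero_add,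
    Multiset.count_cons_self, BT.count_rhoMS_of_lt (lt_add_one a),
    hasCountsFrom_cons_of_lt (lt_add_one a)] at h
  exact ⟨β, by rw [← h.1], h.2⟩

theorem BT.hasCountsFrom_node_leaf_right {l : BT} (hl : l ≠ .leaf) {a : ℤ} {α : List ℕ}
    (h : HasCountsFrom ((BT.node l .leaf).rhoMS a) a α) :
    ∃ b β, b ≠ 0 ∧ α = (b + 1) :: β ∧ HasCountsFrom (l.rhoMS a) a (b :: β) := by
  obtain ⟨x, β, rfl⟩ := h.exists_cons (BT.mem_rhoMS_self BT.noConfusion a)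
  simp only [hasCountsFrom_cons_iff, BT.rhoMS, add_zero, Multiset.count_cons_self,
    hasCountsFrom_cons_of_lt (lt_add_one a)] at h
  exact ⟨_, β, Multiset.count_ne_zero.2 (BT.mem_rhoMS_self hl a), by rw [← h.1],
    hasCountsFrom_cons_iff.2 ⟨rfl, h.2⟩⟩

theorem BT.polyAux_eq_fundQFrom : ∀ {t : BT}, t.linear → ∀ {s n : ℕ} {α : List ℕ},
    (∀ x ∈ α, 0 < x) → n + 1 = s + α.length → HasCountsFrom (t.rhoMS s) s α →
    ∀ lo, t.polyAux s lo = fundQFrom α n lo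
  | .leaf, _, s, n, α, hα, _, hc, lo => by
    have hnil : α = [] := by
      cases α with
      | nil => rfl
      | cons x β =>
        have hx : x = 0 := by simpa [BT.rhoMS] using (hasCountsFrom_cons_iff.1 hc).1.symm
        exact absurd hx (hα x List.mem_cons_self).ne'
    simp [hnil, BT.polyAux, fundQFrom_nil]
  | .node l r, ⟨hlr, hl, hr⟩, s, n, α, hα, hn, hc, lo => by
    by_cases hleaf : l = .leaf
    · subst hleaf
      obtain ⟨β, rfl, hβc⟩ := BT.hasCountsFrom_node_leaf_left hc
      have hβ : ∀ y ∈ β, 0 < y := fun y hy => hα y (List.mem_cons_of_mem _ hy)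
      rw [List.length_cons] at hn
      rw [fundQFrom_one_cons hβ (by omega : n = s + β.length)]
      simp only [BT.polyAux, BT.size, Nat.cast_zero, add_zero, mul_one, Int.toNat_natCast]
      refine Finset.sum_congr rfl fun k _ => ?_
      rw [← BT.polyAux_eq_fundQFrom hr (s := s + 1) hβ (by omega) (by exact_mod_cast hβc),
        Nat.cast_succ]
    · obtain rfl := hlr.resolve_left hleaf
      obtain ⟨b, β, hb, rfl, hβc⟩ := BT.hasCountsFrom_node_leaf_right hleaf hc
      have hβ : ∀ y ∈ β, 0 < y := fun y hy => hα y (List.mem_cons_of_mem _ hy)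
      rw [List.length_cons] at hn
      rw [fundQFrom_succ_cons hb hβ (by omega : n = s + β.length)]
      simp only [BT.polyAux, mul_one, Int.toNat_natCast]
      refine Finset.sum_congr rfl fun k _ => ?_
      rw [BT.polyAux_eq_fundQFrom hl (List.forall_mem_cons.2 ⟨Nat.pos_of_ne_zero hb, hβ⟩)
        (by rw [List.length_cons]; omega) hβc]

theorem BT.size_pos {t : BT} (ht : t ≠ .leaf) : 0 < t.size := by
  cases t with
  | leaf => exact absurd rfl ht
  | node l r => simp [BT.size]

theorem BT.root_eq_of_count_rhoMS {t : BT} (ht : t ≠ .leaf) {a : ℤ} (ha : 1 ≤ a) {j : ℕ}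
    {α : List ℕ} (hα : ∀ x ∈ α, 0 < x)
    (hc : ∀ i : ℕ, (t.rhoMS a).count ((i : ℤ) + 1) = if i < j then 0 else α.getD (i - j) 0) :
    a = (j : ℤ) + 1 := by
  obtain ⟨i, rfl⟩ : ∃ i : ℕ, a = i + 1 := ⟨(a - 1).toNat, by omega⟩
  have hroot := Multiset.count_ne_zero.2 (BT.mem_rhoMS_self ht ((i : ℤ) + 1))
  rw [hc i] at hroot
  split_ifs at hroot with hij
  · exact absurd rfl hroot
  obtain ⟨x, β, rfl⟩ : ∃ x β, α = x :: β := by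
    cases α with
    | nil => simp at hroot
    | cons x β => exact ⟨x, β, rfl⟩
  have hj : (j : ℤ) + 1 ∈ t.rhoMS ((i : ℤ) + 1) := by
    rw [← Multiset.count_ne_zero, hc j]
    simpa using (hα x List.mem_cons_self).ne'
  have := BT.le_of_mem_rhoMS hj
  omega

/-- if `F` is an indexed linear tree with
`c(F) = (0^j, α_1, …, α_k)`, all `α_i > 0`, then
`β_F = F_α(x_1, …, x_{k+j})`. -/
theorem linear_tree_poly_is_fundamental (a : ℤ) (t : BT) (ht : t ≠ BT.leaf)
    (hlin : t.linear) (F : IndexedForest) (hF : F.trees = [(a, t)])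
    (hpos : ∀ i ∈ F.Supp, 1 ≤ i) (j : ℕ) (α : List ℕ) (hα : ∀ x ∈ α, 0 < x)
    (hc : ∀ i : ℕ, cOf F ((i : ℤ) + 1) = if i < j then 0 else α.getD (i - j) 0) :
    F.poly = fundQ α (α.length + j) := by
  have hpoly : F.poly = t.polyAux a 1 := by simp [IndexedForest.poly, polyL, hF, BT.poly]
  have hcount : ∀ i : ℕ, (t.rhoMS a).count ((i : ℤ) + 1) =
      if i < j then 0 else α.getD (i - j) 0 := by
    simpa [cOf, IndexedForest.rhoMS, hF] using hc
  have ha : 1 ≤ a := hpos a ⟨(a, t), by simp [hF], le_rfl, by simpa using BT.size_pos ht⟩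
  obtain rfl := BT.root_eq_of_count_rhoMS ht ha hα hcount
  have hcounts : HasCountsFrom (t.rhoMS ((j + 1 : ℕ) : ℤ)) ((j + 1 : ℕ) : ℤ) α := fun i => by
    simpa [add_right_comm] using hcount (j + i)
  rw [hpoly, ← fundQFrom_one]
  exact_mod_cast BT.polyAux_eq_fundQFrom hlin hα (by omega) hcounts 1
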